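/- arXiv:1311.7583 — 7 statements merged into one kernel-verified Lean document; each statement's English description precedes it below -/
import Mathlib

section
/- Let $S_n$ be the $n\times n$ circulant-type matrix ($n\geq 3$) with diagonal entries $a$, superdiagonal entries $b$, subdiagonal entries $c$, top-right corner entry $c$, and bottom-left corner entry $b$. If $x_1, x_2$ are the roots of $x^2 - ax + bc = 0$, then $\det(S_n) = x_1^n + x_2^n + (-1)^{n+1}(b^n + c^n)$. -/
/-!
`S_n` is the circulant matrix with first column `a e₀ + c e₁ + b e₋₁`, so the Vandermonde matrix
of the powers of a primitive `n`-th root of unity `ζ` diagonalises it and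
`det S_n = ∏ₖ (a + c ζᵏ + b ζ⁻ᵏ)`. By Vieta, `c ζᵏ` times the `k`-th factor is
`(x₁ + c ζᵏ) (x₂ + c ζᵏ)`, and `∏ₖ (u + w ζᵏ) = uⁿ - (-w)ⁿ` evaluates both resulting products.
When `c = 0` the factors are linear in `ζ⁻ᵏ = (ζⁿ⁻¹)ᵏ`, and `ζⁿ⁻¹` is again a primitive root.
-/

open Matrix Finset Polynomial

theorem Fin.eq_add_one_iff_val {n : ℕ} [NeZero n] (i j : Fin n) :
    j = i + 1 ↔ (j : ℕ) = i + 1 ∨ ((i : ℕ) = n - 1 ∧ (j : ℕ) = 0) := by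
  obtain ⟨m, rfl⟩ : ∃ m, n = m + 1 := Nat.exists_eq_succ_of_ne_zero (NeZero.ne n)
  rw [Fin.ext_iff, Fin.val_add_one]
  split_ifs with h <;> rw [Fin.ext_iff, Fin.val_last] at h <;> omega

theorem Fin.val_neg_one_of_neZero {n : ℕ} [NeZero n] : ((-1 : Fin n) : ℕ) = n - 1 := by
  obtain ⟨m, rfl⟩ : ∃ m, n = m + 1 := Nat.exists_eq_succ_of_ne_zero (NeZero.ne n)
  simp [Fin.coe_neg_one]

theorem pow_fin_val_add {M : Type*} [Monoid M] {n : ℕ} {x : M} (h : x ^ n = 1) (s t : Fin n) :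
    x ^ ((s + t : Fin n) : ℕ) = x ^ (s : ℕ) * x ^ (t : ℕ) := by
  rw [Fin.val_add, ← pow_eq_pow_mod _ h, pow_add]

theorem IsPrimitiveRoot.pow_pow_eq_one {M : Type*} [CommMonoid M] {ζ : M} {n : ℕ}
    (hζ : IsPrimitiveRoot ζ n) (k : ℕ) : (ζ ^ k) ^ n = 1 := by
  rw [pow_right_comm, hζ.pow_eq_one, one_pow]

namespace IsPrimitiveRoot

variable {R : Type*} [CommRing R] [IsDomain R] {n : ℕ} [NeZero n] {ζ : R}

theorem prod_nthRootsFinset_eq_prod_fin {M : Type*} [CommMonoid M] (hζ : IsPrimitiveRoot ζ n)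
    (f : R → M) : ∏ μ ∈ nthRootsFinset n (1 : R), f μ = ∏ k : Fin n, f (ζ ^ (k : ℕ)) := by
  have hn := NeZero.pos n
  refine (prod_nbij (fun k : Fin n => ζ ^ (k : ℕ)) (fun k _ => ?_)
    (fun k _ l _ h => Fin.ext (hζ.pow_inj k.isLt l.isLt h)) (fun μ hμ => ?_) fun _ _ => rfl).symm
  · exact (Polynomial.mem_nthRootsFinset hn 1).mpr (hζ.pow_pow_eq_one k)
  · obtain ⟨k, hk, rfl⟩ := hζ.eq_pow_of_pow_eq_one ((Polynomial.mem_nthRootsFinset hn 1).mp hμ)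
    exact ⟨⟨k, hk⟩, mem_coe.mpr (mem_univ _), rfl⟩

theorem prod_add_mul_pow (hζ : IsPrimitiveRoot ζ n) (u w : R) :
    ∏ k : Fin n, (u + w * ζ ^ (k : ℕ)) = u ^ n - (-w) ^ n := by
  rw [hζ.pow_sub_pow_eq_prod_sub_mul u (-w) (NeZero.pos n), hζ.prod_nthRootsFinset_eq_prod_fin]
  simp only [mul_neg, sub_neg_eq_add, mul_comm]

theorem prod_add_mul_pow_pow_pred (hζ : IsPrimitiveRoot ζ n) (u w : R) :
    ∏ k : Fin n, (u + w * (ζ ^ (k : ℕ)) ^ (n - 1)) = u ^ n - (-w) ^ n := by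
  have hζ' : IsPrimitiveRoot (ζ ^ (n - 1)) n := hζ.pow_of_coprime _
    ((Nat.coprime_self_sub_right NeZero.one_le).mpr (Nat.coprime_one_right n)).symm
  simp only [← hζ'.prod_add_mul_pow, ← pow_mul, mul_comm]

theorem prod_pow_fin_val (hζ : IsPrimitiveRoot ζ n) : ∏ k : Fin n, ζ ^ (k : ℕ) = -(-1) ^ n := by
  simpa [zero_pow (NeZero.ne n)] using hζ.prod_add_mul_pow 0 1

theorem det_circulant (hζ : IsPrimitiveRoot ζ n) (v : Fin n → R) :
    (circulant v).det = ∏ k : Fin n, ∑ t : Fin n, v t * (ζ ^ (k : ℕ)) ^ (t : ℕ) := by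
  set F : Matrix (Fin n) (Fin n) R := vandermonde fun k : Fin n => ζ ^ (k : ℕ)
  have hF : F.det ≠ 0 :=
    det_vandermonde_ne_zero_iff.mpr fun k l h => Fin.ext (hζ.pow_inj k.isLt l.isLt h)
  have hFC : F * circulant v =
      diagonal (fun k : Fin n => ∑ t, v t * (ζ ^ (k : ℕ)) ^ (t : ℕ)) * F := by
    ext k j
    rw [mul_apply, diagonal_mul, sum_mul]
    refine Fintype.sum_equiv (Equiv.subRight j) _ _ fun i => ?_
    simp only [F, vandermonde_apply, circulant_apply, Equiv.subRight_apply]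
    rw [mul_assoc, ← pow_fin_val_add (hζ.pow_pow_eq_one k) (i - j) j, sub_add_cancel, mul_comm]
  have hdet := congrArg det hFC
  rw [det_mul, det_mul, det_diagonal, mul_comm] at hdet
  exact mul_right_cancel₀ hF hdet

theorem prod_add_mul_add_mul_pow_pred (hζ : IsPrimitiveRoot ζ n) {a b c x₁ x₂ : R}
    (hsum : x₁ + x₂ = a) (hprod : x₁ * x₂ = b * c) :
    ∏ k : Fin n, (a + c * ζ ^ (k : ℕ) + b * (ζ ^ (k : ℕ)) ^ (n - 1)) =
      x₁ ^ n + x₂ ^ n + (-1) ^ (n + 1) * (b ^ n + c ^ n) := by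
  have hn := NeZero.ne n
  by_cases hc : c = 0
  · simp only [hc, zero_mul, add_zero, hζ.prod_add_mul_pow_pow_pred, neg_pow b, pow_succ,
      zero_pow hn]
    rw [hc, mul_zero, mul_eq_zero] at hprod
    rcases hprod with rfl | rfl
    · rw [← hsum, zero_add, zero_pow hn]; ring
    · rw [← hsum, add_zero, zero_pow hn]; ring
  have hsplit : ∀ k : Fin n,
      (a + c * ζ ^ (k : ℕ) + b * (ζ ^ (k : ℕ)) ^ (n - 1)) * (c * ζ ^ (k : ℕ)) =
        (x₁ + c * ζ ^ (k : ℕ)) * (x₂ + c * ζ ^ (k : ℕ)) := by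
    intro k
    have hk : (ζ ^ (k : ℕ)) ^ (n - 1) * ζ ^ (k : ℕ) = 1 := by
      rw [← pow_succ, Nat.sub_add_cancel NeZero.one_le, hζ.pow_pow_eq_one]
    linear_combination (-(c * ζ ^ (k : ℕ))) * hsum - hprod + (b * c) * hk
  have h := prod_congr rfl fun k (_ : k ∈ univ) => hsplit k
  rw [prod_mul_distrib, prod_mul_distrib, prod_mul_distrib, prod_const, card_univ,
    Fintype.card_fin, hζ.prod_pow_fin_val, hζ.prod_add_mul_pow, hζ.prod_add_mul_pow] at h
  have hs : (-1 : R) ^ n * (-1) ^ n = 1 := by rw [← mul_pow]; norm_num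
  have hx : x₁ ^ n * x₂ ^ n = b ^ n * c ^ n := by rw [← mul_pow, hprod, mul_pow]
  refine mul_right_cancel₀ (mul_ne_zero (pow_ne_zero n hc)
    (neg_ne_zero.mpr (pow_ne_zero n (neg_ne_zero.mpr one_ne_zero)))) (h.trans ?_)
  rw [neg_pow c, pow_succ]
  linear_combination hx - b ^ n * c ^ n * hs

end IsPrimitiveRoot

theorem Matrix.of_tridiagonal_with_corners_eq_circulant {α : Type*} [AddMonoid α] {n : ℕ}
    [NeZero n] (hn : 3 ≤ n) (a b c : α) :
    Matrix.of (fun i j : Fin n =>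
      if (i : ℕ) = (j : ℕ) then a
      else if (j : ℕ) = (i : ℕ) + 1 then b
      else if (i : ℕ) = (j : ℕ) + 1 then c
      else if (i : ℕ) = 0 ∧ (j : ℕ) = n - 1 then c
      else if (i : ℕ) = n - 1 ∧ (j : ℕ) = 0 then b
      else 0) = circulant (Pi.single 0 a + Pi.single 1 c + Pi.single (-1) b) := by
  ext i j
  have h0 : i - j = 0 ↔ (i : ℕ) = j := by rw [sub_eq_zero, Fin.ext_iff]
  have h1 : i - j = 1 ↔ (i : ℕ) = j + 1 ∨ ((j : ℕ) = n - 1 ∧ (i : ℕ) = 0) := by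
    rw [sub_eq_iff_eq_add', Fin.eq_add_one_iff_val]
  have hm1 : i - j = -1 ↔ (j : ℕ) = i + 1 ∨ ((i : ℕ) = n - 1 ∧ (j : ℕ) = 0) := by
    rw [← neg_eq_iff_eq_neg, neg_sub, sub_eq_iff_eq_add', Fin.eq_add_one_iff_val]
  simp only [of_apply, circulant_apply, Pi.add_apply, Pi.single_apply, h0, h1, hm1]
  split_ifs <;> first | rfl | omega | simp

theorem sum_single_add_single_add_single_mul_pow {R : Type*} [Semiring R] {n : ℕ} [NeZero n]
    (hn : 2 ≤ n) (a b c y : R) :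
    ∑ t : Fin n, (Pi.single 0 a + Pi.single 1 c + Pi.single (-1) b : Fin n → R) t * y ^ (t : ℕ) =
      a + c * y + b * y ^ (n - 1) := by
  simp [add_mul, sum_add_distrib, Pi.single_apply, Fin.val_neg_one_of_neZero,
    Nat.mod_eq_of_lt (by omega : 1 < n)]

/-- Determinant of the circulant-type matrix `S_n` (`n ≥ 3`) with diagonal `a`,
superdiagonal `b`, subdiagonal `c`, corner entries `c` (top-right) and `b`
(bottom-left), where `x1, x2` are the roots of `x^2 - a x + b c = 0`
(encoded via Vieta's formulas). -/
theorem det_circulant_type (n : ℕ) (hn : 3 ≤ n) (a b c x1 x2 : ℂ)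
    (hsum : x1 + x2 = a) (hprod : x1 * x2 = b * c) :
    (Matrix.of (fun i j : Fin n =>
      if (i : ℕ) = (j : ℕ) then a
      else if (j : ℕ) = (i : ℕ) + 1 then b
      else if (i : ℕ) = (j : ℕ) + 1 then c
      else if (i : ℕ) = 0 ∧ (j : ℕ) = n - 1 then c
      else if (i : ℕ) = n - 1 ∧ (j : ℕ) = 0 then b
      else 0)).det
      = x1 ^ n + x2 ^ n + (-1) ^ (n + 1) * (b ^ n + c ^ n) := by
  have : NeZero n := ⟨by omega⟩
  have hζ := Complex.isPrimitiveRoot_exp n (NeZero.ne n)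
  rw [of_tridiagonal_with_corners_eq_circulant hn, hζ.det_circulant,
    ← hζ.prod_add_mul_add_mul_pow_pred hsum hprod]
  exact prod_congr rfl fun k _ => sum_single_add_single_add_single_mul_pow (by omega) a b c _
end

section
/- For $0 < \alpha < 1$, $\int_{\{(p,q): p > 0, q > 0\}} \frac{pq}{(p + q + \delta pq)^{\alpha+2}}\, dp\, dq = \frac{1-\alpha}{\alpha(\alpha+1)\,\delta^{2-\alpha}} \cdot \frac{\pi}{\sin(\pi\alpha)}$ for every $\delta > 0$. -/
/-!
Substituting `q = p x / (1 + δ p)` turns the inner integral into `p^(1-α) (1 + δ p)^(-2)` times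
the Beta integral `B(2, α) = 1 / (α (α + 1))`, and substituting `p = x / δ` turns the outer one
into `δ^(α-2) B(2 - α, α) = δ^(α-2) (1 - α) Γ(α) Γ(1 - α)`; Euler's reflection formula gives
`Γ(α) Γ(1 - α) = π / sin (π α)`. Both Beta integrals are of the second kind,
`B(a, b) = ∫₀^∞ x^(a-1) / (1 + x)^(a+b) dx`, obtained from the first kind by `x = t / (1 - t)`.
As the integrand is positive, the nonzero values of the iterated integrals already give the
integrability that Fubini's theorem needs.
-/

open Real MeasureTheory Set

open ProbabilityTheory (beta beta_pos)

theorem integral_Ioo_rpow_mul_one_sub_rpow {a b : ℝ} (ha : 0 < a) (hb : 0 < b) :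
    ∫ x in Ioo (0 : ℝ) 1, x ^ (a - 1) * (1 - x) ^ (b - 1) = beta a b := by
  have key : ((∫ x in Ioo (0 : ℝ) 1, x ^ (a - 1) * (1 - x) ^ (b - 1) : ℝ) : ℂ)
      = Complex.betaIntegral a b := by
    rw [Complex.betaIntegral, intervalIntegral.integral_of_le zero_le_one,
      ← integral_Ioc_eq_integral_Ioo, ← integral_complex_ofReal]
    refine setIntegral_congr_fun measurableSet_Ioc fun x hx => ?_
    push_cast [Complex.ofReal_cpow hx.1.le, Complex.ofReal_cpow (sub_nonneg.2 hx.2)]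
    rfl
  rw [Complex.betaIntegral_eq_Gamma_mul_div _ _ (by simpa) (by simpa), ← Complex.ofReal_add,
    Complex.Gamma_ofReal, Complex.Gamma_ofReal, Complex.Gamma_ofReal] at key
  exact_mod_cast key

lemma image_div_one_sub_Ioo : (fun t : ℝ => t / (1 - t)) '' Ioo 0 1 = Ioi 0 := by
  ext x
  constructor
  · rintro ⟨t, ⟨ht0, ht1⟩, rfl⟩
    exact div_pos ht0 (sub_pos.2 ht1)
  · intro (hx : 0 < x)
    refine ⟨x / (1 + x), ⟨by positivity, (div_lt_one (by positivity)).2 (by linarith)⟩, ?_⟩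
    field_simp
    ring

lemma injOn_div_one_sub : InjOn (fun t : ℝ => t / (1 - t)) (Ioo 0 1) := by
  intro t ht u hu h
  have := sub_pos.2 ht.2
  have := sub_pos.2 hu.2
  field_simp at h
  linarith

lemma hasDerivAt_div_one_sub {x : ℝ} (hx : x ≠ 1) :
    HasDerivAt (fun t : ℝ => t / (1 - t)) ((1 - x) ^ 2)⁻¹ x := by
  have hs : 1 - x ≠ 0 := sub_ne_zero.2 hx.symm
  refine ((hasDerivAt_id' x).div ((hasDerivAt_id' x).const_sub 1) hs).congr_deriv ?_
  field_simp
  ring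

theorem integral_Ioi_rpow_div_one_add_rpow {a b : ℝ} (ha : 0 < a) (hb : 0 < b) :
    ∫ x in Ioi (0 : ℝ), x ^ (a - 1) / (1 + x) ^ (a + b) = beta a b := by
  rw [← image_div_one_sub_Ioo, integral_image_eq_integral_abs_deriv_smul measurableSet_Ioo
    (fun t ht => (hasDerivAt_div_one_sub ht.2.ne).hasDerivWithinAt) injOn_div_one_sub,
    ← integral_Ioo_rpow_mul_one_sub_rpow ha hb]
  refine setIntegral_congr_fun measurableSet_Ioo fun t ⟨ht0, ht1⟩ => ?_
  have hs : 0 < 1 - t := sub_pos.2 ht1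
  have hpow : (1 - t) ^ (a + b) = (1 - t) ^ (a - 1) * (1 - t) ^ (b - 1) * (1 - t) ^ 2 := by
    rw [← rpow_natCast, ← rpow_add hs, ← rpow_add hs]
    congr 1
    push_cast
    ring
  have hsum : 1 + t / (1 - t) = (1 - t)⁻¹ := by field_simp; ring
  rw [hsum, inv_rpow hs.le, div_rpow ht0.le hs.le, smul_eq_mul, abs_of_pos (by positivity)]
  have : (1 - t) ^ (a - 1) ≠ 0 := by positivity
  field_simp
  rw [hpow]
  ring

theorem integral_Ioi_rpow_div_add_mul_rpow {a b c d : ℝ} (ha : 0 < a) (hb : 0 < b) (hc : 0 < c)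
    (hd : 0 < d) :
    ∫ x in Ioi (0 : ℝ), x ^ (a - 1) / (c + d * x) ^ (a + b) = beta a b / (c ^ b * d ^ a) := by
  have hk : 0 < c / d := div_pos hc hd
  have h := integral_comp_mul_left_Ioi' (fun x => x ^ (a - 1) / (c + d * x) ^ (a + b)) 0 hk
  rw [mul_zero] at h
  rw [← h, smul_eq_mul]
  have hx : ∀ x ∈ Ioi (0 : ℝ), (c / d * x) ^ (a - 1) / (c + d * (c / d * x)) ^ (a + b)
      = (c / d) ^ (a - 1) / c ^ (a + b) * (x ^ (a - 1) / (1 + x) ^ (a + b)) := by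
    intro x (hx : 0 < x)
    rw [show c + d * (c / d * x) = c * (1 + x) by field_simp, mul_rpow hc.le (by positivity),
      mul_rpow hk.le hx.le]
    ring
  rw [setIntegral_congr_fun measurableSet_Ioi hx, integral_const_mul,
    integral_Ioi_rpow_div_one_add_rpow ha hb, ← mul_assoc, ← mul_div_assoc,
    ← rpow_one_add' hk.le (by linarith), add_sub_cancel, div_rpow hc.le hd.le, rpow_add hc]
  field_simp

lemma beta_two_left {a : ℝ} (ha : 0 < a) : beta 2 a = 1 / (a * (a + 1)) := by
  have hΓ : Gamma (2 + a) = (a + 1) * a * Gamma a := by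
    rw [add_comm, show a + 2 = a + 1 + 1 by ring, Gamma_add_one (by positivity),
      Gamma_add_one ha.ne', mul_assoc]
  have := (Gamma_pos_of_pos ha).ne'
  rw [beta, hΓ, Gamma_two]
  field_simp

lemma beta_two_sub_left {a : ℝ} (ha : a ≠ 1) : beta (2 - a) a = (1 - a) * (π / sin (π * a)) := by
  rw [beta, show 2 - a = 1 - a + 1 by ring, Gamma_add_one (sub_ne_zero.2 ha.symm),
    show 1 - a + 1 + a = 2 by ring, Gamma_two, div_one, mul_assoc, mul_comm (Gamma (1 - a)),
    Gamma_mul_Gamma_one_sub]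

theorem integral_prod_of_ae_nonneg {X Y : Type*} [MeasurableSpace X] [MeasurableSpace Y]
    {μ : Measure X} {ν : Measure Y} [SFinite μ] [SFinite ν] {f : X × Y → ℝ}
    (hf : AEStronglyMeasurable f (μ.prod ν)) (hf₀ : ∀ᵐ x ∂μ, ∀ᵐ y ∂ν, 0 ≤ f (x, y))
    (hsec : ∀ᵐ x ∂μ, Integrable (fun y => f (x, y)) ν)
    (hint : Integrable (fun x => ∫ y, f (x, y) ∂ν) μ) :
    ∫ z, f z ∂μ.prod ν = ∫ x, ∫ y, f (x, y) ∂ν ∂μ := by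
  refine integral_prod f ((integrable_prod_iff hf).2 ⟨hsec, hint.congr ?_⟩)
  filter_upwards [hf₀] with x hx
  exact integral_congr_ae (hx.mono fun y hy => (norm_of_nonneg hy).symm)

lemma integral_Ioi_mul_div_add_add_mul_rpow {α δ p : ℝ} (hα : 0 < α) (hδ : 0 < δ) (hp : 0 < p) :
    ∫ q in Ioi (0 : ℝ), p * q / (p + q + δ * p * q) ^ (α + 2)
      = beta 2 α * (p ^ (1 - α) / (1 + δ * p) ^ (2 : ℝ)) := by
  have hq : ∀ q ∈ Ioi (0 : ℝ), p * q / (p + q + δ * p * q) ^ (α + 2)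
      = p * (q ^ ((2 : ℝ) - 1) / (p + (1 + δ * p) * q) ^ (2 + α)) := by
    intro q _
    rw [show (2 : ℝ) - 1 = 1 by norm_num, rpow_one, add_comm 2 α]
    ring_nf
  rw [setIntegral_congr_fun measurableSet_Ioi hq, integral_const_mul,
    integral_Ioi_rpow_div_add_mul_rpow two_pos hα hp (by positivity), rpow_sub hp, rpow_one]
  ring

/-- For `0 < α < 1` and `δ > 0`:
`∬_{p,q>0} pq/(p+q+δpq)^{α+2} dp dq = (1-α)/(α(α+1)δ^{2-α}) ⬝ π/sin(πα)`. -/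
theorem double_integral_pq (α δ : ℝ) (hα0 : 0 < α) (hα1 : α < 1) (hδ : 0 < δ) :
    ∫ pq in Set.Ioi (0 : ℝ) ×ˢ Set.Ioi (0 : ℝ),
        pq.1 * pq.2 / (pq.1 + pq.2 + δ * pq.1 * pq.2) ^ (α + 2)
      = (1 - α) / (α * (α + 1) * δ ^ (2 - α)) * (π / Real.sin (π * α)) := by
  have hβ₂ := beta_pos two_pos hα0
  have hβ := beta_pos (by linarith : 0 < 2 - α) hα0
  have hinner : ∀ᵐ p ∂volume.restrict (Ioi (0 : ℝ)),
      ∫ q in Ioi (0 : ℝ), p * q / (p + q + δ * p * q) ^ (α + 2)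
        = beta 2 α * (p ^ (1 - α) / (1 + δ * p) ^ (2 : ℝ)) :=
    ae_restrict_of_forall_mem measurableSet_Ioi fun p hp =>
      integral_Ioi_mul_div_add_add_mul_rpow hα0 hδ hp
  have houter : ∫ p in Ioi (0 : ℝ), p ^ (1 - α) / (1 + δ * p) ^ (2 : ℝ)
      = beta (2 - α) α / δ ^ (2 - α) := by
    simpa only [show 2 - α - 1 = 1 - α by ring, sub_add_cancel, one_rpow, one_mul] using
      integral_Ioi_rpow_div_add_mul_rpow (a := 2 - α) (by linarith) hα0 one_pos hδ
  have hnonneg : ∀ᵐ p ∂volume.restrict (Ioi (0 : ℝ)), ∀ᵐ q ∂volume.restrict (Ioi (0 : ℝ)),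
      0 ≤ p * q / (p + q + δ * p * q) ^ (α + 2) :=
    ae_restrict_of_forall_mem measurableSet_Ioi fun p (hp : 0 < p) =>
      ae_restrict_of_forall_mem measurableSet_Ioi fun q (hq : 0 < q) => by positivity
  rw [Measure.volume_eq_prod, ← Measure.prod_restrict, integral_prod_of_ae_nonneg
      (Measurable.aestronglyMeasurable (by fun_prop)) hnonneg ?_ ?_, integral_congr_ae hinner,
    integral_const_mul, houter, beta_two_left hα0, beta_two_sub_left hα1.ne]
  · field_simp
  · filter_upwards [hinner, ae_restrict_mem measurableSet_Ioi] with p hp (hp₀ : 0 < p)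
    exact .of_integral_ne_zero (by rw [hp]; positivity)
  · refine (Integrable.of_integral_ne_zero ?_).congr (hinner.mono fun p hp => hp.symm)
    rw [integral_const_mul, houter]
    positivity
end

section
/- For $0 < \alpha < 1$ and $\kappa > 0$, $\sum_{n\geq 1} \frac{(1 - e^{-2\sqrt{\kappa}})^n}{n!}\, \Gamma(\alpha + n - 1) = \frac{\Gamma(\alpha)\,(1 - e^{-2\sqrt{\kappa}(1-\alpha)})}{1 - \alpha}$. -/
/-!
With `β = α - 1` and `x = 1 - e^{-2√κ} ∈ [0, 1)`, the `n`-th term is `Γ(β + m) x^m / m!` for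
`m = n + 1`. Since `Γ(β + m) = Γ(β) β(β + 1)⋯(β + m - 1)`, the series over all `m ≥ 0` is `Γ(β)`
times the negative binomial series of `(1 - x)^{-β} = e^{-2√κ(1-α)}`; dropping the `m = 0` term
and using `Γ(α) = β Γ(β)` gives the right-hand side.
-/

open Real

theorem Real.Gamma_add_nat_eq_mul_ascPochhammer {s : ℝ} (hs : ∀ k : ℕ, s ≠ -k) (n : ℕ) :
    Gamma (s + n) = Gamma s * (ascPochhammer ℝ n).eval s := by
  induction n with
  | zero => simp
  | succ n ih =>
    have hsn : s + n ≠ 0 := fun h => hs n (by linarith)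
    rw [Nat.cast_succ, ← add_assoc, Gamma_add_one hsn, ih, ascPochhammer_succ_eval]
    ring

theorem Ring.multichoose_eq_ascPochhammer_div_factorial {K : Type*} [Field K] [CharZero K]
    (s : K) (n : ℕ) : Ring.multichoose s n = (ascPochhammer K n).eval s / n.factorial := by
  rw [eq_div_iff (Nat.cast_ne_zero.2 n.factorial_ne_zero), mul_comm, ← nsmul_eq_mul,
    Ring.factorial_nsmul_multichoose_eq_ascPochhammer, Polynomial.ascPochhammer_smeval_eq_eval]

theorem Real.hasSum_multichoose_mul_pow (s : ℝ) {x : ℝ} (hx : |x| < 1) :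
    HasSum (fun n => Ring.multichoose s n * x ^ n) ((1 - x) ^ (-s)) := by
  have hball : x ∈ Metric.eball (0 : ℝ) 1 := by
    simpa [edist_dist, Real.dist_eq] using hx
  have h := (one_div_one_sub_rpow_hasFPowerSeriesOnBall_zero s).hasSum hball
  simp only [FormalMultilinearSeries.ofScalars_apply_eq, zero_add, smul_eq_mul] at h
  rw [rpow_neg (by linarith [abs_lt.mp hx]), ← one_div]
  simpa only [Ring.multichoose_eq] using h

theorem Real.hasSum_Gamma_add_nat_mul_pow_div_factorial {s x : ℝ} (hs : ∀ k : ℕ, s ≠ -k)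
    (hx : |x| < 1) :
    HasSum (fun n : ℕ => Gamma (s + n) * x ^ n / n.factorial) (Gamma s * (1 - x) ^ (-s)) := by
  refine ((hasSum_multichoose_mul_pow s hx).mul_left (Gamma s)).congr_fun fun n => ?_
  rw [Gamma_add_nat_eq_mul_ascPochhammer hs, Ring.multichoose_eq_ascPochhammer_div_factorial]
  ring

theorem tsum_gamma_series_general (α κ : ℝ) (hα0 : 0 < α) (hα1 : α < 1) :
    ∑' n : ℕ,
        (1 - Real.exp (-2 * Real.sqrt κ)) ^ (n + 1) / (Nat.factorial (n + 1)) *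
          Real.Gamma (α + ((n : ℝ) + 1) - 1)
      = Real.Gamma α * (1 - Real.exp (-2 * Real.sqrt κ * (1 - α))) / (1 - α) := by
  set x := 1 - exp (-2 * sqrt κ)
  have hx : |x| < 1 := by
    have : exp (-2 * sqrt κ) ≤ 1 := exp_le_one_iff.2 (by nlinarith [sqrt_nonneg κ])
    rw [abs_lt]
    constructor <;> linarith [exp_pos (-2 * sqrt κ)]
  have hs : ∀ k : ℕ, α - 1 ≠ -k := by
    rintro (_ | k) hk
    · simp at hk; linarith
    · push_cast at hk; linarith [k.cast_nonneg (α := ℝ)]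
  have hGamma : Gamma α = (α - 1) * Gamma (α - 1) := by
    simpa using Gamma_add_one (sub_ne_zero.2 hα1.ne)
  have hpow : (1 - x) ^ (-(α - 1)) = exp (-2 * sqrt κ * (1 - α)) := by
    rw [sub_sub_cancel, ← exp_mul, neg_sub]
  have hsum := (hasSum_nat_add_iff' 1).2 (hasSum_Gamma_add_nat_mul_pow_div_factorial hs hx)
  refine (hsum.congr_fun fun n => ?_).tsum_eq.trans ?_
  · push_cast
    ring_nf
  · have h1α : 1 - α ≠ 0 := sub_ne_zero.2 hα1.ne'
    simp only [hGamma, hpow, Finset.sum_range_one, Nat.factorial_zero, Nat.cast_one,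
      Nat.cast_zero, add_zero, pow_zero, div_one, mul_one]
    field_simp
    ring

/-- For `0 < α < 1` and `κ > 0`:
`∑_{n ≥ 1} (1-e^{-2√κ})^n Γ(α+n-1)/n! = Γ(α)(1-e^{-2√κ(1-α)})/(1-α)`. -/
theorem tsum_gamma_series (α κ : ℝ) (hα0 : 0 < α) (hα1 : α < 1) (hκ : 0 < κ) :
    ∑' n : ℕ,
        (1 - Real.exp (-2 * Real.sqrt κ)) ^ (n + 1) / (Nat.factorial (n + 1)) *
          Real.Gamma (α + ((n : ℝ) + 1) - 1)
      = Real.Gamma α * (1 - Real.exp (-2 * Real.sqrt κ * (1 - α))) / (1 - α) :=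
  tsum_gamma_series_general α κ hα0 hα1
end

section
/- Let $\kappa > 0$, $0 < \alpha < 1$, and let $0 < a < x$. Then $\int_{x-a}^{x} \left(\frac{2\sqrt{\kappa}}{1-e^{-2\sqrt{\kappa}(x-z)}}\right)^{\alpha} \cdot \frac{(1-\alpha)\sin(\alpha\pi)}{\pi} e^{2\sqrt{\kappa}(\alpha-1)z}\left(\frac{2\sqrt{\kappa}}{1-e^{-2\sqrt{\kappa}z}}\right)^{2-\alpha} dz = \frac{\sqrt{\kappa}}{\pi}\sin(\alpha\pi)\,\frac{e^{\alpha\sqrt{\kappa}x}\,(\sinh(\sqrt{\kappa}a))^{1-\alpha}}{\sinh(\sqrt{\kappa}x)\,(\sinh(\sqrt{\kappa}(x-a)))^{1-\alpha}}$. -/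
/-!
Write `s = √κ`. Since `1 - e^{-2t} = 2 e^{-t} sinh t`, the renewal and Lévy densities become
`s e^{su} / sinh (su)` raised to a power, and the exponentials in the integrand combine to the
constant `e^{α s x}`. What is left to integrate is `sinh (s(x-z))^{-α} sinh (sz)^{α-2}`, which
(by the addition formula for `sinh`) is a constant multiple of the derivative of
`(sinh (s(x-z)) / sinh (sz))^{1-α}`; this antiderivative vanishes at `z = x`.
-/

open Real MeasureTheory Set

lemma one_sub_exp_neg_two_mul (t : ℝ) : 1 - exp (-2 * t) = 2 * exp (-t) * sinh t := by
  rw [sinh_eq, show -2 * t = -t + -t by ring, exp_add]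
  have : exp (-t) * exp t = 1 := by rw [← exp_add]; simp
  linear_combination -this

lemma two_mul_div_one_sub_exp_rpow {s u : ℝ} (hs : 0 < s) (hu : 0 < u) (p : ℝ) :
    (2 * s / (1 - exp (-2 * s * u))) ^ p = s ^ p * exp (s * u * p) / sinh (s * u) ^ p := by
  have hsinh : 0 < sinh (s * u) := sinh_pos_iff.2 (mul_pos hs hu)
  have hbase : 2 * s / (1 - exp (-2 * s * u)) = s * exp (s * u) / sinh (s * u) := by
    rw [mul_assoc, one_sub_exp_neg_two_mul, exp_neg]
    field_simp
  rw [hbase, div_rpow (by positivity) hsinh.le, mul_rpow hs.le (exp_pos _).le, ← exp_mul]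

lemma renewal_mul_levy_eq {s x z : ℝ} (hs : 0 < s) (hz : z ∈ Ioo 0 x) (α C : ℝ) :
    (2 * s / (1 - exp (-2 * s * (x - z)))) ^ α *
        (C * exp (2 * s * (α - 1) * z) * (2 * s / (1 - exp (-2 * s * z))) ^ (2 - α))
      = s ^ 2 * C * exp (α * s * x) * (sinh (s * (x - z)) ^ (-α) * sinh (s * z) ^ (α - 2)) := by
  obtain ⟨hz0, hzx⟩ := hz
  have hxz : 0 < x - z := sub_pos.2 hzx
  have hA : 0 < sinh (s * (x - z)) := sinh_pos_iff.2 (mul_pos hs hxz)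
  have hB : 0 < sinh (s * z) := sinh_pos_iff.2 (mul_pos hs hz0)
  have hexp : exp (s * (x - z) * α) * exp (2 * s * (α - 1) * z) * exp (s * z * (2 - α))
      = exp (α * s * x) := by
    rw [← exp_add, ← exp_add]; ring_nf
  have hpow : s ^ α * s ^ (2 - α) = s ^ 2 := by
    rw [← rpow_add hs, add_sub_cancel, rpow_two]
  rw [two_mul_div_one_sub_exp_rpow hs hxz, two_mul_div_one_sub_exp_rpow hs hz0, rpow_neg hA.le,
    show α - 2 = -(2 - α) by ring, rpow_neg hB.le, ← hpow, ← hexp]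
  have : sinh (s * (x - z)) ^ α ≠ 0 := by positivity
  have : sinh (s * z) ^ (2 - α) ≠ 0 := by positivity
  field_simp

lemma hasDerivAt_sinh_div_sinh_rpow {s x z : ℝ} (hA : 0 < sinh (s * (x - z)))
    (hB : 0 < sinh (s * z)) (α : ℝ) :
    HasDerivAt (fun z => (sinh (s * (x - z)) / sinh (s * z)) ^ (1 - α))
      (-((1 - α) * s * sinh (s * x)) *
        (sinh (s * (x - z)) ^ (-α) * sinh (s * z) ^ (α - 2))) z := by
  have hratio : HasDerivAt (fun z => sinh (s * (x - z)) / sinh (s * z))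
      (-s * sinh (s * x) / sinh (s * z) ^ 2) z := by
    refine ((((hasDerivAt_id z).const_sub x).const_mul s).sinh.div
      ((hasDerivAt_id z).const_mul s).sinh hB.ne').congr_deriv ?_
    have h := sinh_add (s * (x - z)) (s * z)
    rw [show s * (x - z) + s * z = s * x by ring] at h
    rw [id_eq]
    congr 1
    linear_combination s * h
  refine (hratio.rpow_const (p := 1 - α) (Or.inl (div_pos hA hB).ne')).congr_deriv ?_
  rw [show 1 - α - 1 = -α by ring, div_rpow hA.le hB.le, rpow_neg hA.le, rpow_neg hB.le,
    rpow_sub hB, rpow_two]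
  have : sinh (s * (x - z)) ^ α ≠ 0 := by positivity
  have : sinh (s * z) ^ α ≠ 0 := by positivity
  field_simp

lemma integral_sinh_rpow_mul_sinh_rpow {s α a x : ℝ} (hs : 0 < s) (hα : α < 1) (ha : 0 ≤ a)
    (hax : a < x) :
    ∫ z in Ioo (x - a) x, sinh (s * (x - z)) ^ (-α) * sinh (s * z) ^ (α - 2)
      = (sinh (s * a) / sinh (s * (x - a))) ^ (1 - α) / ((1 - α) * s * sinh (s * x)) := by
  have hc : 0 < (1 - α) * s * sinh (s * x) := by
    have := sinh_pos_iff.2 (mul_pos hs (ha.trans_lt hax))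
    have : 0 < 1 - α := by linarith
    positivity
  set F : ℝ → ℝ := fun z =>
    -(sinh (s * (x - z)) / sinh (s * z)) ^ (1 - α) / ((1 - α) * s * sinh (s * x))
  have hsinh_pos : ∀ z ∈ Ioo (x - a) x, 0 < sinh (s * (x - z)) ∧ 0 < sinh (s * z) :=
    fun z hz => ⟨sinh_pos_iff.2 (mul_pos hs (by linarith [hz.2])),
      sinh_pos_iff.2 (mul_pos hs (by linarith [hz.1]))⟩
  have hF : ∀ z ∈ Ioo (x - a) x,
      HasDerivAt F (sinh (s * (x - z)) ^ (-α) * sinh (s * z) ^ (α - 2)) z := by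
    intro z hz
    obtain ⟨hA, hB⟩ := hsinh_pos z hz
    refine ((hasDerivAt_sinh_div_sinh_rpow hA hB α).neg.div_const _).congr_deriv ?_
    rw [neg_mul, neg_neg, mul_div_cancel_left₀ _ hc.ne']
  have hFcont : ContinuousOn F (Icc (x - a) x) := by
    refine ((ContinuousOn.div ?_ ?_ fun z hz => ?_).rpow_const
      fun _ _ => Or.inr (by linarith)).neg.div_const _
    · fun_prop
    · fun_prop
    · exact (sinh_pos_iff.2 (mul_pos hs (by linarith [hz.1]))).ne'
  have hle : x - a ≤ x := by linarith
  have hint : IntervalIntegrable (fun z => sinh (s * (x - z)) ^ (-α) * sinh (s * z) ^ (α - 2))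
      volume (x - a) x :=
    (intervalIntegrable_iff_integrableOn_Ioc_of_le hle).2 <|
      intervalIntegral.integrableOn_deriv_of_nonneg hFcont hF
        fun z hz => by obtain ⟨hA, hB⟩ := hsinh_pos z hz; positivity
  rw [← integral_Ioc_eq_integral_Ioo, ← intervalIntegral.integral_of_le hle,
    intervalIntegral.integral_eq_sub_of_hasDerivAt_of_le hle hFcont hF hint]
  simp only [F, sub_self, mul_zero, sinh_zero, zero_div, zero_rpow (by linarith : 1 - α ≠ 0),
    neg_zero, zero_sub, neg_div, neg_neg, sub_sub_cancel]

theorem overshoot_density_general (κ α a x : ℝ) (hκ : 0 < κ) (hα1 : α < 1)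
    (ha : 0 < a) (hax : a < x) :
    ∫ z in Set.Ioo (x - a) x,
        (2 * Real.sqrt κ / (1 - Real.exp (-2 * Real.sqrt κ * (x - z)))) ^ α *
          ((1 - α) * Real.sin (α * π) / π * Real.exp (2 * Real.sqrt κ * (α - 1) * z) *
            (2 * Real.sqrt κ / (1 - Real.exp (-2 * Real.sqrt κ * z))) ^ (2 - α))
      = Real.sqrt κ / π * Real.sin (α * π) *
          (Real.exp (α * Real.sqrt κ * x) * (Real.sinh (Real.sqrt κ * a)) ^ (1 - α) /
            (Real.sinh (Real.sqrt κ * x) *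
              (Real.sinh (Real.sqrt κ * (x - a))) ^ (1 - α))) := by
  set s := √κ
  have hs : 0 < s := sqrt_pos.2 hκ
  have hsxa : 0 < sinh (s * (x - a)) := sinh_pos_iff.2 (mul_pos hs (by linarith))
  have h1α : 1 - α ≠ 0 := by linarith
  rw [setIntegral_congr_fun measurableSet_Ioo fun z hz =>
      renewal_mul_levy_eq hs ⟨by linarith [hz.1], hz.2⟩ α _,
    integral_const_mul, integral_sinh_rpow_mul_sinh_rpow hs hα1 ha.le hax,
    div_rpow (sinh_pos_iff.2 (mul_pos hs ha)).le hsxa.le]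
  have : sinh (s * (x - a)) ^ (1 - α) ≠ 0 := by positivity
  field_simp

/-- Overshoot density computation: for `κ > 0`, `0 < α < 1`, `0 < a < x`,
`∫_{x-a}^{x} u(x-z) Π(z) dz` equals the displayed closed form, where
`u(t) = (2√κ/(1-e^{-2√κ t}))^α` and
`Π(z) = ((1-α) sin(απ)/π) e^{2√κ(α-1)z} (2√κ/(1-e^{-2√κ z}))^{2-α}`. -/
theorem overshoot_density (κ α a x : ℝ) (hκ : 0 < κ) (hα0 : 0 < α) (hα1 : α < 1)
    (ha : 0 < a) (hax : a < x) :
    ∫ z in Set.Ioo (x - a) x,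
        (2 * Real.sqrt κ / (1 - Real.exp (-2 * Real.sqrt κ * (x - z)))) ^ α *
          ((1 - α) * Real.sin (α * π) / π * Real.exp (2 * Real.sqrt κ * (α - 1) * z) *
            (2 * Real.sqrt κ / (1 - Real.exp (-2 * Real.sqrt κ * z))) ^ (2 - α))
      = Real.sqrt κ / π * Real.sin (α * π) *
          (Real.exp (α * Real.sqrt κ * x) * (Real.sinh (Real.sqrt κ * a)) ^ (1 - α) /
            (Real.sinh (Real.sqrt κ * x) *
              (Real.sinh (Real.sqrt κ * (x - a))) ^ (1 - α))) :=
  overshoot_density_general κ α a x hκ hα1 ha hax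
end

section
/- Let $\kappa > 0$ and $0 < \alpha < 1$. Then $\int_0^1 \frac{z\,dz}{[\sinh(\sqrt{\kappa}(1-z))]^{\alpha}[\sinh(\sqrt{\kappa}z)]^{2-\alpha}} = \frac{\pi\,\sinh(\sqrt{\kappa}(1-\alpha))}{\sin(\alpha\pi)\,\kappa(1-\alpha)\,\sinh\sqrt{\kappa}}$. -/
open Real MeasureTheory

open Set

lemma sin_pi_alpha_pos {α : ℝ} (hα0 : 0 < α) (hα1 : α < 1) : 0 < Real.sin (π * α) :=
  Real.sin_pos_of_pos_of_lt_pi (by positivity) (by nlinarith [Real.pi_pos])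

lemma beta_real {α : ℝ} (hα0 : 0 < α) (hα1 : α < 1) :
    ∫ x in Ioo (0:ℝ) 1, x ^ (-α) * (1 - x) ^ (α - 1) = π / Real.sin (π * α) := by
  have hs := (sin_pi_alpha_pos hα0 hα1).ne'
  have hC : Complex.betaIntegral (1 - α) α = ↑π / Complex.sin (↑π * ↑α) := by
    have h1 : Complex.Gamma (1 - α) * Complex.Gamma α
        = Complex.Gamma ((1 - α) + α) * Complex.betaIntegral (1 - α) α :=
      Complex.Gamma_mul_Gamma_eq_betaIntegral (by rw [Complex.sub_re, Complex.one_re, Complex.ofReal_re]; linarith) (by simpa using hα0)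
    have h2 := Complex.Gamma_mul_Gamma_one_sub (α : ℂ)
    rw [show ((1:ℂ) - α) + α = 1 by ring, Complex.Gamma_one, one_mul] at h1
    rw [← h1, mul_comm, h2]
  have hcoe : (↑(∫ x in (0:ℝ)..1, x ^ (-α) * (1 - x) ^ (α - 1)) : ℂ)
      = Complex.betaIntegral (1 - α) α := by
    rw [← intervalIntegral.integral_ofReal, Complex.betaIntegral]
    apply intervalIntegral.integral_congr
    intro x hx
    rw [Set.uIcc_of_le (by norm_num : (0:ℝ) ≤ 1)] at hx
    have hx0 : 0 ≤ x := hx.1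
    have hx1 : 0 ≤ 1 - x := by linarith [hx.2]
    simp only []
    rw [Complex.ofReal_mul, Complex.ofReal_cpow hx0, Complex.ofReal_cpow hx1]
    push_cast
    ring_nf
  have hval : ∫ x in (0:ℝ)..1, x ^ (-α) * (1 - x) ^ (α - 1) = π / Real.sin (π * α) := by
    have := hC ▸ hcoe
    rw [show (↑π / Complex.sin (↑π * ↑α) : ℂ) = ((π / Real.sin (π * α) : ℝ) : ℂ) by
      push_cast [Complex.ofReal_sin]; ring] at this
    exact_mod_cast this
  rw [← integral_Ioc_eq_integral_Ioo, ← intervalIntegral.integral_of_le (by norm_num : (0:ℝ) ≤ 1)]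
  exact hval

lemma mellin_one_add {α : ℝ} (hα0 : 0 < α) (hα1 : α < 1) :
    ∫ u in Ioi (0:ℝ), u ^ (-α) / (1 + u) = π / Real.sin (π * α) := by
  have himg : (fun x : ℝ => x / (1 - x)) '' Ioo 0 1 = Ioi 0 := by
    ext u
    constructor
    · rintro ⟨x, hx, rfl⟩
      exact div_pos hx.1 (by linarith [hx.2])
    · intro hu
      refine ⟨u / (1 + u), ⟨div_pos hu (by linarith [mem_Ioi.mp hu]), ?_⟩, ?_⟩
      · rw [div_lt_one (by linarith [mem_Ioi.mp hu])]; linarith [mem_Ioi.mp hu]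
      · have h1u : (0:ℝ) < 1 + u := by linarith [mem_Ioi.mp hu]
        field_simp; ring
  have hderiv : ∀ x ∈ Ioo (0:ℝ) 1,
      HasDerivWithinAt (fun x : ℝ => x / (1 - x)) ((1 - x)^2)⁻¹ (Ioo 0 1) x := by
    intro x hx
    have h1x : (1:ℝ) - x ≠ 0 := by intro h; nlinarith [hx.2]
    have : HasDerivAt (fun x : ℝ => x / (1 - x))
        ((1 * (1 - x) - x * (0 - 1)) / (1 - x)^2) x :=
      (hasDerivAt_id x).div ((hasDerivAt_const x 1).sub (hasDerivAt_id x)) h1x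
    have := this.hasDerivWithinAt (s := Ioo 0 1)
    rw [show ((1 - x)^2)⁻¹ = (1 * (1 - x) - x * (0 - 1)) / (1 - x)^2 by
      rw [inv_eq_one_div]; congr 1; ring]; exact this
  have hinj : InjOn (fun x : ℝ => x / (1 - x)) (Ioo 0 1) := by
    intro x hx y hy h
    have hx2 : (1:ℝ) - x ≠ 0 := by intro hc; nlinarith [hx.2]
    have hy2 : (1:ℝ) - y ≠ 0 := by intro hc; nlinarith [hy.2]
    field_simp at h
    nlinarith [h]
  have key := integral_image_eq_integral_abs_deriv_smul measurableSet_Ioo hderiv hinj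
    (fun u => u ^ (-α) / (1 + u))
  rw [himg] at key
  rw [key, ← beta_real hα0 hα1]
  apply setIntegral_congr_fun measurableSet_Ioo
  intro x hx
  have hx0 : 0 < x := hx.1
  have hx1 : 0 < 1 - x := by linarith [hx.2]
  have h1 : 1 + x / (1 - x) = (1 - x)⁻¹ := by field_simp; ring
  have h2 : (x / (1 - x)) ^ (-α) = x ^ (-α) * (1 - x) ^ α := by
    rw [Real.div_rpow hx0.le hx1.le, Real.rpow_neg hx0.le, Real.rpow_neg hx1.le]
    field_simp
  simp only [smul_eq_mul, h1, h2]
  rw [abs_of_pos (by positivity : (0:ℝ) < ((1 - x)^2)⁻¹)]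
  rw [Real.rpow_sub hx1, Real.rpow_one]
  field_simp

lemma mellin_add_c {α c : ℝ} (hα0 : 0 < α) (hα1 : α < 1) (hc : 0 < c) :
    ∫ u in Ioi (0:ℝ), u ^ (-α) / (u + c) = c ^ (-α) * (π / Real.sin (π * α)) := by
  have h := MeasureTheory.integral_comp_mul_left_Ioi
    (fun u => u ^ (-α) / (u + c)) 0 hc
  rw [mul_zero] at h
  have h2 : ∫ x in Ioi (0:ℝ), (fun u => u ^ (-α) / (u + c)) (c * x)
      = ∫ x in Ioi (0:ℝ), c⁻¹ * (c ^ (-α) * (x ^ (-α) / (1 + x))) := by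
    apply setIntegral_congr_fun measurableSet_Ioi
    intro x hx
    have hx0 : 0 < x := hx
    simp only []
    rw [Real.mul_rpow hc.le hx0.le]
    rw [show c * x + c = c * (1 + x) by ring]
    field_simp
  rw [h2] at h
  rw [integral_const_mul, integral_const_mul, mellin_one_add hα0 hα1] at h
  rw [smul_eq_mul] at h
  have hcne : c ≠ 0 := hc.ne'
  field_simp at h
  rw [h.symm, mul_comm α π, mul_div_assoc]

lemma mellin_integrable {α c : ℝ} (hα0 : 0 < α) (hα1 : α < 1) (hc : 0 < c) :
    IntegrableOn (fun u : ℝ => u ^ (-α) / (u + c)) (Ioi 0) := by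
  have hmeas : AEStronglyMeasurable (fun u : ℝ => u ^ (-α) / (u + c))
      (volume.restrict (Ioi (0:ℝ))) := by
    apply ContinuousOn.aestronglyMeasurable _ measurableSet_Ioi
    intro u hu
    have hu0 : 0 < u := hu
    exact ((Real.continuousAt_rpow_const u (-α) (Or.inl hu0.ne')).continuousWithinAt).div
      (continuousWithinAt_id.add continuousWithinAt_const) (by positivity)
  rw [show Ioi (0:ℝ) = Ioc 0 1 ∪ Ioi 1 by rw [Ioc_union_Ioi_eq_Ioi]; norm_num]
  apply IntegrableOn.union
  · have hbase : IntegrableOn (fun u : ℝ => u ^ (-α) * c⁻¹) (Ioc 0 1) := by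
      apply Integrable.mul_const (c := c⁻¹)
      rw [← IntegrableOn, ← intervalIntegrable_iff_integrableOn_Ioc_of_le
        (by norm_num : (0:ℝ) ≤ 1)]
      exact intervalIntegral.intervalIntegrable_rpow' (by linarith)
    apply Integrable.mono hbase (hmeas.mono_set (Ioc_subset_Ioi_self))
    filter_upwards [ae_restrict_mem measurableSet_Ioc] with u hu
    have hu0 : 0 < u := hu.1
    rw [Real.norm_eq_abs, Real.norm_eq_abs, abs_of_nonneg (by positivity),
      abs_of_nonneg (by positivity)]
    rw [div_eq_mul_inv]
    apply mul_le_mul_of_nonneg_left _ (by positivity)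
    exact inv_anti₀ hc (by linarith)
  · have hbase : IntegrableOn (fun u : ℝ => u ^ (-α - 1)) (Ioi 1) :=
      integrableOn_Ioi_rpow_of_lt (by linarith) one_pos
    apply Integrable.mono hbase (hmeas.mono_set (Ioi_subset_Ioi (by norm_num)))
    filter_upwards [ae_restrict_mem measurableSet_Ioi] with u hu
    have hu1 : 1 < u := hu
    have hu0 : 0 < u := by linarith
    rw [Real.norm_eq_abs, Real.norm_eq_abs, abs_of_nonneg (by positivity),
      abs_of_nonneg (by positivity)]
    rw [Real.rpow_sub hu0, Real.rpow_one, div_le_div_iff₀ (by positivity) (by positivity)]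
    have : u ≤ u + c := by linarith
    nlinarith [Real.rpow_pos_of_pos hu0 (-α)]

lemma log_eq_integral {u a b : ℝ} (hu : 0 < u) (hb : 0 < b) (hba : b < a) :
    Real.log ((u + a) / (u + b)) = ∫ c in Ioc b a, (u + c)⁻¹ := by
  rw [← intervalIntegral.integral_of_le hba.le]
  have h1 : ∫ c in b..a, (u + c)⁻¹ = ∫ x in (u+b)..(u+a), x⁻¹ := by
    rw [← intervalIntegral.integral_comp_add_left (fun x => x⁻¹) u]
  rw [h1]
  have h0 : (0:ℝ) ∉ Set.uIcc (u + b) (u + a) := by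
    rw [Set.uIcc_of_le (by linarith)]
    intro hmem
    have := hmem.1
    linarith
  have := integral_one_div h0
  simp only [one_div] at this
  rw [this]

lemma improper_log_integral {α a b : ℝ} (hα0 : 0 < α) (hα1 : α < 1) (hb : 0 < b)
    (hba : b < a) :
    ∫ u in Ioi (0:ℝ), u ^ (-α) * Real.log ((u + a) / (u + b))
      = π / Real.sin (π * α) * ((a ^ (1 - α) - b ^ (1 - α)) / (1 - α)) := by
  have hsin := sin_pi_alpha_pos hα0 hα1
  have hKpos : 0 < π / Real.sin (π * α) := div_pos Real.pi_pos hsin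
  have hFmeas : AEMeasurable
      (Function.uncurry (fun u c : ℝ => ENNReal.ofReal (u ^ (-α) * (u + c)⁻¹)))
      ((volume.restrict (Ioi (0:ℝ))).prod (volume.restrict (Ioc b a))) := by
    apply Measurable.aemeasurable
    fun_prop
  have swap := MeasureTheory.lintegral_lintegral_swap hFmeas
  -- left side
  have hleft : ∫⁻ u in Ioi (0:ℝ),
        (∫⁻ c in Ioc b a, ENNReal.ofReal (u ^ (-α) * (u + c)⁻¹)) 
      = ∫⁻ u in Ioi (0:ℝ),
        ENNReal.ofReal (u ^ (-α) * Real.log ((u + a) / (u + b))) := by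
    apply lintegral_congr_ae
    filter_upwards [ae_restrict_mem measurableSet_Ioi] with u hu
    have hu0 : (0:ℝ) < u := hu
    have hint : IntegrableOn (fun c : ℝ => (u + c)⁻¹) (Ioc b a) := by
      apply (ContinuousOn.integrableOn_Icc _).mono_set Ioc_subset_Icc_self
      intro c hc
      exact (continuousWithinAt_const.add continuousWithinAt_id).inv₀
        (ne_of_gt (by have h1 := hc.1; show 0 < u + c; linarith))
    have hnn : 0 ≤ᵐ[volume.restrict (Ioc b a)] fun c : ℝ => (u + c)⁻¹ := by
      filter_upwards [ae_restrict_mem measurableSet_Ioc] with c hc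
      exact le_of_lt (inv_pos.mpr (by have h1 := hc.1; linarith))
    calc ∫⁻ c in Ioc b a, ENNReal.ofReal (u ^ (-α) * (u + c)⁻¹)
        = ∫⁻ c in Ioc b a, ENNReal.ofReal (u ^ (-α)) * ENNReal.ofReal ((u + c)⁻¹) := by
          apply lintegral_congr; intro c
          exact ENNReal.ofReal_mul (Real.rpow_nonneg hu0.le _)
      _ = ENNReal.ofReal (u ^ (-α)) * ∫⁻ c in Ioc b a, ENNReal.ofReal ((u + c)⁻¹) :=
          lintegral_const_mul' _ _ ENNReal.ofReal_ne_top
      _ = ENNReal.ofReal (u ^ (-α)) * ENNReal.ofReal (∫ c in Ioc b a, (u + c)⁻¹) := by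
          rw [← ofReal_integral_eq_lintegral_ofReal hint hnn]
      _ = ENNReal.ofReal (u ^ (-α) * Real.log ((u + a) / (u + b))) := by
          rw [← log_eq_integral hu0 hb hba,
            ← ENNReal.ofReal_mul (Real.rpow_nonneg hu0.le _)]
  -- right side
  have hright : ∫⁻ c in Ioc b a,
        (∫⁻ u in Ioi (0:ℝ), ENNReal.ofReal (u ^ (-α) * (u + c)⁻¹))
      = ENNReal.ofReal (π / Real.sin (π * α) * ((a ^ (1 - α) - b ^ (1 - α)) / (1 - α))) := by
    have h1 : ∫⁻ c in Ioc b a,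
        (∫⁻ u in Ioi (0:ℝ), ENNReal.ofReal (u ^ (-α) * (u + c)⁻¹))
        = ∫⁻ c in Ioc b a, ENNReal.ofReal (c ^ (-α) * (π / Real.sin (π * α))) := by
      apply lintegral_congr_ae
      filter_upwards [ae_restrict_mem measurableSet_Ioc] with c hc
      have hc0 : (0:ℝ) < c := lt_trans hb hc.1
      have hnn : 0 ≤ᵐ[volume.restrict (Ioi (0:ℝ))] fun u : ℝ => u ^ (-α) / (u + c) := by
        filter_upwards [ae_restrict_mem measurableSet_Ioi] with u hu
        have hu0 : (0:ℝ) < u := hu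
        positivity
      have h2 := ofReal_integral_eq_lintegral_ofReal (mellin_integrable hα0 hα1 hc0) hnn
      rw [mellin_add_c hα0 hα1 hc0] at h2
      calc ∫⁻ u in Ioi (0:ℝ), ENNReal.ofReal (u ^ (-α) * (u + c)⁻¹)
          = ∫⁻ u in Ioi (0:ℝ), ENNReal.ofReal (u ^ (-α) / (u + c)) := by
            apply lintegral_congr; intro u; rw [div_eq_mul_inv]
        _ = ENNReal.ofReal (c ^ (-α) * (π / Real.sin (π * α))) := h2.symm
    rw [h1]
    have hintc : IntegrableOn (fun c : ℝ => c ^ (-α) * (π / Real.sin (π * α))) (Ioc b a) := by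
      apply (ContinuousOn.integrableOn_Icc _).mono_set Ioc_subset_Icc_self
      intro c hc
      have hc0 : (0:ℝ) < c := lt_of_lt_of_le hb hc.1
      exact ((Real.continuousAt_rpow_const c (-α)
        (Or.inl hc0.ne')).continuousWithinAt).mul continuousWithinAt_const
    have hnnc : 0 ≤ᵐ[volume.restrict (Ioc b a)]
        fun c : ℝ => c ^ (-α) * (π / Real.sin (π * α)) := by
      filter_upwards [ae_restrict_mem measurableSet_Ioc] with c hc
      have hc0 : (0:ℝ) < c := lt_trans hb hc.1
      positivity
    rw [← ofReal_integral_eq_lintegral_ofReal hintc hnnc]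
    congr 1
    rw [integral_mul_const, ← intervalIntegral.integral_of_le hba.le,
      integral_rpow (Or.inl (by linarith : (-1:ℝ) < -α))]
    rw [show -α + 1 = 1 - α by ring]
    ring
  -- assemble
  have hGnn : 0 ≤ᵐ[volume.restrict (Ioi (0:ℝ))]
      fun u : ℝ => u ^ (-α) * Real.log ((u + a) / (u + b)) := by
    filter_upwards [ae_restrict_mem measurableSet_Ioi] with u hu
    have hu0 : (0:ℝ) < u := hu
    have h1 : (1:ℝ) ≤ (u + a) / (u + b) := by
      rw [le_div_iff₀ (by linarith)]; linarith
    exact mul_nonneg (Real.rpow_nonneg hu0.le _) (Real.log_nonneg h1)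
  have hGmeas : AEStronglyMeasurable
      (fun u : ℝ => u ^ (-α) * Real.log ((u + a) / (u + b)))
      (volume.restrict (Ioi (0:ℝ))) := by
    apply ContinuousOn.aestronglyMeasurable _ measurableSet_Ioi
    intro u hu
    have hu0 : (0:ℝ) < u := hu
    apply ContinuousWithinAt.mul
    · exact (Real.continuousAt_rpow_const u (-α) (Or.inl hu0.ne')).continuousWithinAt
    · apply ContinuousAt.continuousWithinAt
      exact ContinuousAt.log
        ((continuousAt_id.add continuousAt_const).div
          (continuousAt_id.add continuousAt_const) (ne_of_gt (by linarith : (0:ℝ) < u + b)))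
        (ne_of_gt (div_pos (by linarith) (by linarith)))
  have hVnn : 0 ≤ π / Real.sin (π * α) * ((a ^ (1 - α) - b ^ (1 - α)) / (1 - α)) := by
    apply mul_nonneg hKpos.le
    apply div_nonneg _ (by linarith)
    have := Real.rpow_le_rpow hb.le hba.le (by linarith : (0:ℝ) ≤ 1 - α)
    linarith
  rw [integral_eq_lintegral_of_nonneg_ae hGnn hGmeas]
  rw [← hleft, swap, hright, ENNReal.toReal_ofReal hVnn]

/-- For `κ > 0` and `0 < α < 1`:
`∫_0^1 z (sinh(√κ(1-z)))^{-α} (sinh(√κ z))^{α-2} dz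
  = π sinh(√κ(1-α)) / (sin(απ) κ (1-α) sinh √κ)`. -/
theorem integral_sinh_ratio (κ α : ℝ) (hκ : 0 < κ) (hα0 : 0 < α) (hα1 : α < 1) :
    ∫ z in Set.Ioo (0 : ℝ) 1,
        z / ((Real.sinh (Real.sqrt κ * (1 - z))) ^ α *
          (Real.sinh (Real.sqrt κ * z)) ^ (2 - α))
      = π * Real.sinh (Real.sqrt κ * (1 - α)) /
          (Real.sin (α * π) * κ * (1 - α) * Real.sinh (Real.sqrt κ)) := by
  set s := Real.sqrt κ with hsdef
  have hs : 0 < s := Real.sqrt_pos.mpr hκ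
  have hs2 : s ^ 2 = κ := Real.sq_sqrt hκ.le
  set a := Real.exp s with hadef
  set b := Real.exp (-s) with hbdef
  have hb : 0 < b := Real.exp_pos _
  have ha : 0 < a := Real.exp_pos _
  have hba : b < a := Real.exp_lt_exp.mpr (by linarith)
  have hsinh : 0 < Real.sinh s := Real.sinh_pos_iff.mpr hs
  set ψ : ℝ → ℝ := fun z => Real.sinh (s * (1 - z)) / Real.sinh (s * z) with hψdef
  -- basic positivity on Ioo 0 1
  have hB : ∀ z ∈ Ioo (0:ℝ) 1, 0 < Real.sinh (s * z) :=
    fun z hz => Real.sinh_pos_iff.mpr (by nlinarith [hz.1])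
  have hA : ∀ z ∈ Ioo (0:ℝ) 1, 0 < Real.sinh (s * (1 - z)) :=
    fun z hz => Real.sinh_pos_iff.mpr (by nlinarith [hz.2])
  -- numerator / denominator identities
  have hnum : ∀ z ∈ Ioo (0:ℝ) 1,
      ψ z + a = Real.exp (s*z) * (a - b) / (2 * Real.sinh (s * z)) := by
    intro z hz
    have hBz := (hB z hz).ne'
    have hE : (0:ℝ) < Real.exp (s*z) := Real.exp_pos _
    have h1 : Real.sinh (s*z) = (Real.exp (s*z) - (Real.exp (s*z))⁻¹)/2 := by
      rw [Real.sinh_eq, Real.exp_neg]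
    have h2 : Real.sinh (s*(1-z)) = (a * (Real.exp (s*z))⁻¹ - Real.exp (s*z) * b)/2 := by
      rw [Real.sinh_eq, show -(s*(1-z)) = -s + s*z by ring,
        show s*(1-z) = s + -(s*z) by ring, Real.exp_add, Real.exp_add, Real.exp_neg]
      rw [hadef, hbdef, Real.exp_neg]
      ring
    rw [hψdef]
    simp only []
    rw [h2]
    rw [div_add' _ _ _ hBz, div_eq_div_iff hBz (by positivity)]
    rw [h1]
    field_simp
    ring
  have hden : ∀ z ∈ Ioo (0:ℝ) 1,
      ψ z + b = (a - b) / (2 * Real.exp (s*z) * Real.sinh (s * z)) := by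
    intro z hz
    have hBz := (hB z hz).ne'
    have hE : (0:ℝ) < Real.exp (s*z) := Real.exp_pos _
    have h1 : Real.sinh (s*z) = (Real.exp (s*z) - (Real.exp (s*z))⁻¹)/2 := by
      rw [Real.sinh_eq, Real.exp_neg]
    have h2 : Real.sinh (s*(1-z)) = (a * (Real.exp (s*z))⁻¹ - Real.exp (s*z) * b)/2 := by
      rw [Real.sinh_eq, show -(s*(1-z)) = -s + s*z by ring,
        show s*(1-z) = s + -(s*z) by ring, Real.exp_add, Real.exp_add, Real.exp_neg]
      rw [hadef, hbdef, Real.exp_neg]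
      ring
    rw [hψdef]
    simp only []
    rw [h2]
    rw [div_add' _ _ _ hBz, div_eq_div_iff hBz (by positivity)]
    rw [h1]
    field_simp
    ring
  have hψpos : ∀ z ∈ Ioo (0:ℝ) 1, 0 < ψ z :=
    fun z hz => div_pos (hA z hz) (hB z hz)
  have hratio : ∀ z ∈ Ioo (0:ℝ) 1, (ψ z + a)/(ψ z + b) = Real.exp (2*s*z) := by
    intro z hz
    have hE : (0:ℝ) < Real.exp (s*z) := Real.exp_pos _
    rw [hnum z hz, hden z hz, show 2*s*z = s*z + s*z by ring, Real.exp_add]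
    have hBz := (hB z hz).ne'
    have habne : a - b ≠ 0 := sub_ne_zero.mpr hba.ne'
    field_simp
  have hlog : ∀ z ∈ Ioo (0:ℝ) 1,
      Real.log ((ψ z + a)/(ψ z + b)) = 2*s*z := by
    intro z hz
    rw [hratio z hz, Real.log_exp]
  -- injectivity
  have hinj : InjOn ψ (Ioo (0:ℝ) 1) := by
    intro z1 h1 z2 h2 heq
    have e1 := hlog z1 h1
    have e2 := hlog z2 h2
    rw [heq] at e1
    rw [e1] at e2
    have : s ≠ 0 := hs.ne'
    field_simp at e2
    tauto
  -- image
  have himg : ψ '' Ioo (0:ℝ) 1 = Ioi 0 := by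
    ext u
    constructor
    · rintro ⟨z, hz, rfl⟩
      exact hψpos z hz
    · intro hu
      have hu0 : (0:ℝ) < u := hu
      have hub : (0:ℝ) < u + b := by linarith
      have hw1 : (1:ℝ) < (u + a)/(u + b) := by
        rw [lt_div_iff₀ hub]; linarith
      have hw2 : (u + a)/(u + b) < Real.exp (2*s) := by
        have : Real.exp (2*s) = a / b := by
          rw [hadef, hbdef, ← Real.exp_sub]; ring_nf
        rw [this, div_lt_div_iff₀ hub hb]
        nlinarith
      set z := Real.log ((u + a)/(u + b)) / (2*s) with hzdef
      have hlogw : 0 < Real.log ((u + a)/(u + b)) := Real.log_pos hw1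
      have hlogw2 : Real.log ((u + a)/(u + b)) < 2*s := by
        calc Real.log ((u + a)/(u + b)) < Real.log (Real.exp (2*s)) :=
              Real.log_lt_log (by positivity) hw2
          _ = 2*s := Real.log_exp _
      have hz : z ∈ Ioo (0:ℝ) 1 := by
        constructor
        · exact div_pos hlogw (by positivity)
        · rw [hzdef, div_lt_one (by positivity)]; exact hlogw2
      refine ⟨z, hz, ?_⟩
      have hr := hratio z hz
      have h2sz : 2*s*z = Real.log ((u + a)/(u + b)) := by
        rw [hzdef]; field_simp
      rw [h2sz, Real.exp_log (by positivity)] at hr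
      have hψb : 0 < ψ z + b := by linarith [hψpos z hz]
      rw [div_eq_div_iff hψb.ne' hub.ne'] at hr
      have hfin : (ψ z - u) * (a - b) = 0 := by linarith [hr]; 
      rcases mul_eq_zero.mp hfin with h | h
      · linarith
      · linarith
  -- derivative
  have hderiv : ∀ z ∈ Ioo (0:ℝ) 1,
      HasDerivWithinAt ψ (-(s * Real.sinh s) / Real.sinh (s * z) ^ 2) (Ioo 0 1) z := by
    intro z hz
    have hBz := (hB z hz).ne'
    have hf : HasDerivAt (fun z : ℝ => s*(1-z)) (-s) z := by
      simpa using ((hasDerivAt_id z).const_sub 1).const_mul s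
    have hA1 : HasDerivAt (fun z => Real.sinh (s*(1-z)))
        (Real.cosh (s*(1-z)) * (-s)) z := hf.sinh
    have hg : HasDerivAt (fun z : ℝ => s*z) s z := by
      simpa using (hasDerivAt_id z).const_mul s
    have hB1 : HasDerivAt (fun z => Real.sinh (s*z)) (Real.cosh (s*z) * s) z := hg.sinh
    have hdiv := hA1.div hB1 hBz
    have hsum : Real.sinh (s*z) * Real.cosh (s*(1-z))
        + Real.cosh (s*z) * Real.sinh (s*(1-z)) = Real.sinh s := by
      rw [← Real.sinh_add, show s*z + s*(1-z) = s by ring]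
    have heqd : (Real.cosh (s*(1-z)) * (-s) * Real.sinh (s*z)
        - Real.sinh (s*(1-z)) * (Real.cosh (s*z) * s)) / Real.sinh (s*z) ^ 2
        = -(s * Real.sinh s) / Real.sinh (s * z) ^ 2 := by
      congr 1
      linear_combination (-s) * hsum
    rw [heqd] at hdiv
    exact hdiv.hasDerivWithinAt
  -- change of variables
  have key := MeasureTheory.integral_image_eq_integral_abs_deriv_smul
    measurableSet_Ioo hderiv hinj
    (fun u => (u ^ (-α) * Real.log ((u + a) / (u + b))) / (2 * s^2 * Real.sinh s))
  rw [himg] at key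
  have hintegrand : ∀ z ∈ Ioo (0:ℝ) 1,
      |(-(s * Real.sinh s) / Real.sinh (s * z) ^ 2)| •
        (((ψ z) ^ (-α) * Real.log ((ψ z + a) / (ψ z + b))) / (2 * s^2 * Real.sinh s))
      = z / ((Real.sinh (s * (1 - z))) ^ α * (Real.sinh (s * z)) ^ (2 - α)) := by
    intro z hz
    have hBz := hB z hz
    have hAz := hA z hz
    have habs : |(-(s * Real.sinh s) / Real.sinh (s * z) ^ 2)|
        = (s * Real.sinh s) / Real.sinh (s * z) ^ 2 := by
      rw [abs_div, abs_neg, abs_of_pos (by positivity), abs_of_pos (by positivity)]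
    rw [habs, hlog z hz, smul_eq_mul]
    have hψα : (ψ z) ^ (-α) = (Real.sinh (s*(1-z))) ^ (-α) * (Real.sinh (s*z)) ^ α := by
      rw [hψdef]
      simp only []
      rw [Real.div_rpow hAz.le hBz.le, Real.rpow_neg hBz.le]
      field_simp
    rw [hψα]
    have e1 : (Real.sinh (s*(1-z))) ^ (-α) = ((Real.sinh (s*(1-z))) ^ α)⁻¹ := by
      rw [← Real.rpow_neg hAz.le]
    have e2 : (Real.sinh (s*z)) ^ ((2:ℝ) - α)
        = Real.sinh (s*z) ^ (2:ℕ) * ((Real.sinh (s*z)) ^ α)⁻¹ := by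
      rw [show (2:ℝ) - α = ((2:ℕ):ℝ) + (-α) by push_cast; ring,
        Real.rpow_add hBz, Real.rpow_natCast, Real.rpow_neg hBz.le]
    rw [e1, e2]
    have hαA : (0:ℝ) < (Real.sinh (s*(1-z))) ^ α := Real.rpow_pos_of_pos hAz _
    have hαB : (0:ℝ) < (Real.sinh (s*z)) ^ α := Real.rpow_pos_of_pos hBz _
    field_simp
  have hLHS : ∫ z in Ioo (0:ℝ) 1,
      z / ((Real.sinh (s * (1 - z))) ^ α * (Real.sinh (s * z)) ^ (2 - α))
      = ∫ u in Ioi (0:ℝ),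
        (u ^ (-α) * Real.log ((u + a) / (u + b))) / (2 * s^2 * Real.sinh s) := by
    rw [key]
    apply setIntegral_congr_fun measurableSet_Ioo
    intro z hz
    exact (hintegrand z hz).symm
  rw [hLHS, integral_div, improper_log_integral hα0 hα1 hb hba]
  -- final computation
  have hae : a ^ (1 - α) = Real.exp (s * (1 - α)) := by
    rw [hadef, Real.rpow_def_of_pos (Real.exp_pos s), Real.log_exp]
  have hbe : b ^ (1 - α) = Real.exp (-(s * (1 - α))) := by
    rw [hbdef, Real.rpow_def_of_pos (Real.exp_pos (-s)), Real.log_exp]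
    ring_nf
  have hdiff : a ^ (1 - α) - b ^ (1 - α) = 2 * Real.sinh (s * (1 - α)) := by
    rw [hae, hbe, Real.sinh_eq]; ring
  rw [hdiff]
  have hsinκ : Real.sin (α * π) = Real.sin (π * α) := by rw [mul_comm]
  rw [hsinκ, ← hs2]
  have h1α : (1:ℝ) - α ≠ 0 := by linarith
  have hsin := (sin_pi_alpha_pos hα0 hα1).ne'
  field_simp
end

section
/- Let $\kappa > 0$, $0 < \alpha < 1$, and let $(\kappa^{(n)})$ satisfy $n^2\kappa^{(n)} \to \kappa$. Let $r^{(n)} = \log(1 + \kappa^{(n)}/2 + \sqrt{\kappa^{(n)} + (\kappa^{(n)})^2/4})$ and define $C^{(n)}(m) = \left(\frac{1 - e^{-2r^{(n)}}}{1 - e^{-2(m+1)r^{(n)}}}\right)^{\alpha}$. Then for every $b > 0$, $\lim_{n\to\infty} n^{\alpha}\, C^{(n)}(\lfloor bn \rfloor) = \left(\frac{2\sqrt{\kappa}}{1 - e^{-2b\sqrt{\kappa}}}\right)^{\alpha}$. -/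
open Real Filter

/-!
Writing `x = κ⁽ⁿ⁾`, one has `1 + x/2 + √(x + x²/4) = (√x/2 + √(1 + x/4))²`, so
`r⁽ⁿ⁾ = 2 arsinh (√x / 2)` and `n r⁽ⁿ⁾ → √κ` because `n √x → √κ`. The first-order expansion of
`t ↦ 1 - e^{-2t}` at `0` then gives `n (1 - e^{-2r⁽ⁿ⁾}) → 2√κ`, while `(⌊bn⌋ + 1) r⁽ⁿ⁾ → b√κ`
sends the denominator to `1 - e^{-2b√κ} > 0`, where `t ↦ t^α` is continuous.
-/

open Topology

open Asymptotics in
theorem HasDerivAt.tendsto_mul_comp {ι : Type*} {l : Filter ι} {f : ℝ → ℝ} {f' L : ℝ}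
    (hf : HasDerivAt f f' 0) (hf0 : f 0 = 0) {c s : ι → ℝ} (hc : Tendsto c l atTop)
    (hcs : Tendsto (fun i => c i * s i) l (𝓝 L)) :
    Tendsto (fun i => c i * f (s i)) l (𝓝 (f' * L)) := by
  have hs : Tendsto s l (𝓝 0) := by
    have h := hcs.mul (tendsto_inv_atTop_zero.comp hc)
    rw [mul_zero] at h
    refine h.congr' ?_
    filter_upwards [hc.eventually_ne_atTop 0] with i hi
    rw [Function.comp_apply, mul_right_comm, mul_inv_cancel₀ hi, one_mul]
  have hlin : (fun i => f (s i) - s i * f') =o[l] s := by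
    simpa [Function.comp_def, hf0] using (hasDerivAt_iff_isLittleO.mp hf).comp_tendsto hs
  have herr : Tendsto (fun i => c i * (f (s i) - s i * f')) l (𝓝 0) :=
    (isLittleO_one_iff ℝ).mp
      (((isBigO_refl c l).mul_isLittleO hlin).trans_isBigO (hcs.isBigO_one ℝ))
  simpa using (herr.add (hcs.const_mul f')).congr fun i => by ring

theorem log_one_add_half_add_sqrt {x : ℝ} (hx : 0 ≤ x) :
    log (1 + x / 2 + √(x + x ^ 2 / 4)) = 2 * arsinh (√x / 2) := by
  have hy : (√x / 2) ^ 2 = x / 4 := by rw [div_pow, sq_sqrt hx]; norm_num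
  have hcross : √x * √(1 + x / 4) = √(x + x ^ 2 / 4) := by
    rw [← sqrt_mul hx]; ring_nf
  have hsq : (√x / 2 + √(1 + (√x / 2) ^ 2)) ^ 2 = 1 + x / 2 + √(x + x ^ 2 / 4) := by
    rw [hy, add_sq, hy, sq_sqrt (by positivity), ← hcross]
    ring
  rw [arsinh, ← hsq, log_pow]
  norm_num

theorem tendsto_natCast_mul_log_one_add_half_add_sqrt {x : ℕ → ℝ} {κ : ℝ}
    (hx : ∀ᶠ n in atTop, 0 ≤ x n) (hlim : Tendsto (fun n : ℕ => (n : ℝ) ^ 2 * x n) atTop (𝓝 κ)) :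
    Tendsto (fun n : ℕ => (n : ℝ) * log (1 + x n / 2 + √(x n + x n ^ 2 / 4))) atTop (𝓝 √κ) := by
  have hsqrt : Tendsto (fun n : ℕ => (n : ℝ) * (√(x n) / 2)) atTop (𝓝 (√κ / 2)) := by
    refine (((continuous_sqrt.tendsto κ).comp hlim).div_const 2).congr fun n => ?_
    simp [sqrt_mul (sq_nonneg _), mul_div_assoc]
  have h := ((hasDerivAt_arsinh 0).const_mul 2).tendsto_mul_comp (by simp)
    tendsto_natCast_atTop_atTop hsqrt
  rw [show 2 * (√(1 + (0 : ℝ) ^ 2))⁻¹ * (√κ / 2) = √κ by norm_num; ring] at h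
  refine h.congr' ?_
  filter_upwards [hx] with n hn
  rw [log_one_add_half_add_sqrt hn]

theorem tendsto_natFloor_mul_add_one_mul {b ρ : ℝ} (hb : 0 ≤ b) {r : ℕ → ℝ}
    (hr : Tendsto (fun n : ℕ => (n : ℝ) * r n) atTop (𝓝 ρ)) :
    Tendsto (fun n : ℕ => ((⌊b * n⌋₊ : ℝ) + 1) * r n) atTop (𝓝 (b * ρ)) := by
  have hfloor : Tendsto (fun n : ℕ => ((⌊b * n⌋₊ : ℝ) + 1) / n) atTop (𝓝 b) := by
    simpa [add_div] using
      ((tendsto_nat_floor_mul_div_atTop hb).comp tendsto_natCast_atTop_atTop).add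
        (tendsto_inv_atTop_zero.comp tendsto_natCast_atTop_atTop)
  refine (hfloor.mul hr).congr' ?_
  filter_upwards [eventually_ne_atTop 0] with n hn
  field_simp

theorem renewal_hit_prob_asymptotics_general (κ α : ℝ) (hκ : 0 < κ)
    (κseq r : ℕ → ℝ)
    (hlim : Tendsto (fun n : ℕ => (n : ℝ) ^ 2 * κseq n) atTop (nhds κ))
    (hr : ∀ n, r n = Real.log (1 + κseq n / 2 +
      Real.sqrt (κseq n + (κseq n) ^ 2 / 4)))
    (C : ℕ → ℕ → ℝ)
    (hC : ∀ n m, C n m =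
      ((1 - Real.exp (-2 * r n)) / (1 - Real.exp (-2 * ((m : ℝ) + 1) * r n))) ^ α) :
    ∀ b : ℝ, 0 < b →
      Tendsto (fun n : ℕ => (n : ℝ) ^ α * C n ⌊b * (n : ℝ)⌋₊) atTop
        (nhds ((2 * Real.sqrt κ / (1 - Real.exp (-2 * b * Real.sqrt κ))) ^ α)) := by
  intro b hb
  have hκseq_pos : ∀ᶠ n in atTop, 0 < κseq n := by
    filter_upwards [hlim.eventually_const_lt hκ] with n hn
    exact pos_of_mul_pos_right hn (sq_nonneg _)
  have hnr : Tendsto (fun n : ℕ => (n : ℝ) * r n) atTop (𝓝 √κ) := by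
    simpa only [← hr] using
      tendsto_natCast_mul_log_one_add_half_add_sqrt (hκseq_pos.mono fun _ => le_of_lt) hlim
  have hr_pos : ∀ᶠ n in atTop, 0 < r n := by
    filter_upwards [hnr.eventually_const_lt (sqrt_pos.mpr hκ)] with n hn
    exact pos_of_mul_pos_right hn (Nat.cast_nonneg n)
  have hnum : Tendsto (fun n : ℕ => (n : ℝ) * (1 - exp (-2 * r n))) atTop (𝓝 (2 * √κ)) := by
    have hd : HasDerivAt (fun t => 1 - exp (-2 * t)) 2 0 := by
      simpa using ((hasDerivAt_id (0 : ℝ)).const_mul (-2)).exp.const_sub 1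
    exact hd.tendsto_mul_comp (by simp) tendsto_natCast_atTop_atTop hnr
  have hden : Tendsto (fun n : ℕ => 1 - exp (-2 * ((⌊b * n⌋₊ : ℝ) + 1) * r n)) atTop
      (𝓝 (1 - exp (-2 * b * √κ))) := by
    have h := (tendsto_natFloor_mul_add_one_mul hb.le hnr).const_mul (-2)
    simpa only [mul_assoc, Function.comp_def] using ((continuous_exp.tendsto _).comp h).const_sub 1
  have hden_pos : 0 < 1 - exp (-2 * b * √κ) :=
    sub_pos.mpr (exp_lt_one_iff.mpr (by have := sqrt_pos.mpr hκ; nlinarith))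
  refine ((hnum.div hden hden_pos.ne').rpow_const
    (Or.inl (div_pos (by positivity) hden_pos).ne')).congr' ?_
  filter_upwards [hr_pos] with n hrn
  have hA : 0 ≤ 1 - exp (-2 * r n) := sub_nonneg.mpr (exp_le_one_iff.mpr (by linarith))
  have hm : 0 ≤ ((⌊b * n⌋₊ : ℝ) + 1) * r n := by positivity
  have hB : 0 ≤ 1 - exp (-2 * ((⌊b * n⌋₊ : ℝ) + 1) * r n) :=
    sub_nonneg.mpr (exp_le_one_iff.mpr (by linarith))
  rw [hC, Pi.div_apply, mul_div_assoc, mul_rpow (Nat.cast_nonneg n) (div_nonneg hA hB)]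

/-- Asymptotics of the renewal hitting probability:
`nᵅ C⁽ⁿ⁾(⌊bn⌋) → (2√κ/(1-e^{-2b√κ}))^α`. -/
theorem renewal_hit_prob_asymptotics (κ α : ℝ) (hκ : 0 < κ)
    (hα0 : 0 < α) (hα1 : α < 1) (κseq r : ℕ → ℝ)
    (hpos : ∀ n, 0 < κseq n)
    (hlim : Tendsto (fun n : ℕ => (n : ℝ) ^ 2 * κseq n) atTop (nhds κ))
    (hr : ∀ n, r n = Real.log (1 + κseq n / 2 +
      Real.sqrt (κseq n + (κseq n) ^ 2 / 4)))
    (C : ℕ → ℕ → ℝ)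
    (hC : ∀ n m, C n m =
      ((1 - Real.exp (-2 * r n)) / (1 - Real.exp (-2 * ((m : ℝ) + 1) * r n))) ^ α) :
    ∀ b : ℝ, 0 < b →
      Tendsto (fun n : ℕ => (n : ℝ) ^ α * C n ⌊b * (n : ℝ)⌋₊) atTop
        (nhds ((2 * Real.sqrt κ / (1 - Real.exp (-2 * b * Real.sqrt κ))) ^ α)) :=
  renewal_hit_prob_asymptotics_general κ α hκ κseq r hlim hr C hC
end

section
/- Let $p_n \in (0,1)$ and $c_n > 0$ with $\lim_{n\to\infty} n^2\kappa^{(n)} = \kappa > 0$ where $\kappa^{(n)} = \frac{1+c_n - 2\sqrt{p_n(1-p_n)}}{\sqrt{p_n(1-p_n)}}$, and $\lim_{n\to\infty} n^2 c_n = \epsilon \in [0, \kappa/2]$. Set $r^{(n)} = \log(1 + \kappa^{(n)}/2 + \sqrt{\kappa^{(n)} + (\kappa^{(n)})^2/4})$. Then $\lim_{n\to\infty}\left(\frac{\cosh(n r^{(n)}) - \cosh\left(\frac{n}{2}\log\frac{p_n}{1-p_n}\right)}{\cosh(n r^{(n)})}\right)^{\alpha} = \left(\frac{\cosh\sqrt{\kappa}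 - \cosh\sqrt{\kappa - 2\epsilon}}{\cosh\sqrt{\kappa}}\right)^{\alpha}$ for any fixed $\alpha > 0$. -/
open Real Filter Topology

/-!
Both hyperbolic cosines have the form `cosh (n * y n)` where `n ^ 2 * (2 * (cosh (y n) - 1))`
converges: `r n = arcosh (1 + κseq n / 2)` gives the limit `κ`, and for
`y n = log (p n / (1 - p n)) / 2` one has `cosh (y n) = 1 / (2 √(p n (1 - p n)))`, whence
`2 * (cosh (y n) - 1) = (κseq n - 2 * c n) / (1 + c n)` and the limit `κ - 2ε`.
The two-sided bound `y ^ 2 ≤ 2 * (cosh y - 1) ≤ y ^ 2 * exp (y ^ 2 / 2)` shows that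
`n ^ 2 * (2 * (cosh (y n) - 1)) → L` forces `n * |y n| → √L`.
-/

lemma sq_le_two_mul_cosh_sub_one (y : ℝ) : y ^ 2 ≤ 2 * (cosh y - 1) := by
  have hcosh := cosh_two_mul (y / 2)
  rw [mul_div_cancel₀ y two_ne_zero, cosh_sq] at hcosh
  have hsinh : (y / 2) ^ 2 ≤ sinh (y / 2) ^ 2 := by
    rw [← sq_abs (y / 2), ← sq_abs (sinh _), abs_sinh]
    exact pow_le_pow_left₀ (abs_nonneg _) (self_le_sinh_iff.2 (abs_nonneg _)) 2
  nlinarith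

lemma two_mul_cosh_sub_one_le (y : ℝ) : 2 * (cosh y - 1) ≤ y ^ 2 * exp (y ^ 2 / 2) := by
  have hcosh := cosh_le_exp_half_sq y
  have hexp := one_sub_le_exp_neg (y ^ 2 / 2)
  have hinv : exp (y ^ 2 / 2) * exp (-(y ^ 2 / 2)) = 1 := by rw [← exp_add]; simp
  nlinarith [exp_pos (y ^ 2 / 2)]

theorem tendsto_abs_mul_of_tendsto_sq_mul_cosh_sub_one {ι : Type*} {l : Filter ι}
    {g y : ι → ℝ} {L : ℝ} (hg : Tendsto g l atTop)
    (h : Tendsto (fun i => g i ^ 2 * (2 * (cosh (y i) - 1))) l (𝓝 L)) :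
    Tendsto (fun i => |g i * y i|) l (𝓝 √L) := by
  have hg2 : Tendsto (fun i => g i ^ 2) l atTop := (tendsto_pow_atTop two_ne_zero).comp hg
  have hcosh : Tendsto (fun i => 2 * (cosh (y i) - 1)) l (𝓝 0) := by
    refine (h.div_atTop hg2).congr' ?_
    filter_upwards [hg.eventually_gt_atTop 0] with i hi
    field_simp
  have hy : Tendsto (fun i => y i ^ 2) l (𝓝 0) :=
    squeeze_zero (fun i => sq_nonneg _) (fun i => sq_le_two_mul_cosh_sub_one _) hcosh
  have hexp : Tendsto (fun i => exp (-(y i ^ 2 / 2))) l (𝓝 1) := by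
    simpa using (hy.div_const 2).neg.rexp
  have hsq : Tendsto (fun i => (g i * y i) ^ 2) l (𝓝 L) := by
    refine tendsto_of_tendsto_of_tendsto_of_le_of_le (by simpa using h.mul hexp) h
      (fun i => ?_) (fun i => ?_)
    · have hδ : 2 * (cosh (y i) - 1) * exp (-(y i ^ 2 / 2)) ≤ y i ^ 2 := by
        calc 2 * (cosh (y i) - 1) * exp (-(y i ^ 2 / 2))
            ≤ y i ^ 2 * exp (y i ^ 2 / 2) * exp (-(y i ^ 2 / 2)) :=
              mul_le_mul_of_nonneg_right (two_mul_cosh_sub_one_le _) (exp_pos _).le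
          _ = y i ^ 2 := by rw [mul_assoc, ← exp_add, add_neg_cancel, exp_zero, mul_one]
      dsimp only
      rw [mul_pow, mul_assoc]
      exact mul_le_mul_of_nonneg_left hδ (sq_nonneg _)
    · dsimp only
      rw [mul_pow]
      exact mul_le_mul_of_nonneg_left (sq_le_two_mul_cosh_sub_one _) (sq_nonneg _)
  exact ((continuous_sqrt.tendsto L).comp hsq).congr fun i => sqrt_sq_eq_abs _

theorem tendsto_cosh_mul_of_tendsto_sq_mul_cosh_sub_one {ι : Type*} {l : Filter ι}
    {g y : ι → ℝ} {L : ℝ} (hg : Tendsto g l atTop)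
    (h : Tendsto (fun i => g i ^ 2 * (2 * (cosh (y i) - 1))) l (𝓝 L)) :
    Tendsto (fun i => cosh (g i * y i)) l (𝓝 (cosh √L)) := by
  simpa only [Function.comp_def, cosh_abs] using
    (continuous_cosh.tendsto _).comp (tendsto_abs_mul_of_tendsto_sq_mul_cosh_sub_one hg h)

lemma cosh_log_div_div_two {p q : ℝ} (hp : 0 < p) (hq : 0 < q) :
    cosh (log (p / q) / 2) = (p + q) / (2 * √(p * q)) := by
  have hsp := sqrt_pos.2 hp
  have hsq := sqrt_pos.2 hq
  rw [← log_sqrt (div_pos hp hq).le, cosh_log (sqrt_pos.2 (div_pos hp hq)),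
    sqrt_div hp.le, sqrt_mul hp.le]
  field_simp
  rw [sq_sqrt hp.le, sq_sqrt hq.le]

lemma log_add_sqrt_eq_arcosh (k : ℝ) :
    log (1 + k / 2 + √(k + k ^ 2 / 4)) = arcosh (1 + k / 2) := by
  rw [arcosh]; ring_nf

lemma sqrt_mul_one_sub_le_half (p : ℝ) : √(p * (1 - p)) ≤ 1 / 2 :=
  (sqrt_le_left (by norm_num)).2 (by nlinarith [sq_nonneg (2 * p - 1)])

lemma tendsto_zero_of_tendsto_natCast_sq_mul {a : ℕ → ℝ} {L : ℝ}
    (h : Tendsto (fun n : ℕ => (n : ℝ) ^ 2 * a n) atTop (𝓝 L)) : Tendsto a atTop (𝓝 0) := by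
  refine (h.div_atTop ((tendsto_pow_atTop two_ne_zero).comp tendsto_natCast_atTop_atTop)).congr' ?_
  filter_upwards [eventually_gt_atTop 0] with n hn
  simp only [Function.comp_apply]
  field_simp

theorem cover_prob_limit_general (κ ε α : ℝ) (hα : 0 < α) (p c κseq r : ℕ → ℝ)
    (hp : ∀ n, p n ∈ Set.Ioo (0 : ℝ) 1) (hc : ∀ n, 0 < c n)
    (hκdef : ∀ n, κseq n =
      (1 + c n - 2 * Real.sqrt (p n * (1 - p n))) / Real.sqrt (p n * (1 - p n)))
    (hκlim : Tendsto (fun n : ℕ => (n : ℝ) ^ 2 * κseq n) atTop (nhds κ))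
    (hclim : Tendsto (fun n : ℕ => (n : ℝ) ^ 2 * c n) atTop (nhds ε))
    (hr : ∀ n, r n = Real.log (1 + κseq n / 2 +
      Real.sqrt (κseq n + (κseq n) ^ 2 / 4))) :
    Tendsto (fun n : ℕ =>
        ((Real.cosh ((n : ℝ) * r n) -
            Real.cosh ((n : ℝ) / 2 * Real.log (p n / (1 - p n)))) /
          Real.cosh ((n : ℝ) * r n)) ^ α)
      atTop
      (nhds (((Real.cosh (Real.sqrt κ) - Real.cosh (Real.sqrt (κ - 2 * ε))) /
        Real.cosh (Real.sqrt κ)) ^ α)) := by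
  have hq : ∀ n, 0 < 1 - p n := fun n => sub_pos.2 (hp n).2
  have hs : ∀ n, 0 < √(p n * (1 - p n)) := fun n => sqrt_pos.2 (mul_pos (hp n).1 (hq n))
  have hcosh_r : ∀ n, 2 * (cosh (r n) - 1) = κseq n := fun n => by
    have hκseq : 0 ≤ κseq n := hκdef n ▸
      div_nonneg (by linarith [hc n, sqrt_mul_one_sub_le_half (p n)]) (hs n).le
    rw [hr n, log_add_sqrt_eq_arcosh, cosh_arcosh (by linarith)]; ring
  have hcosh_log : ∀ n, 2 * (cosh (log (p n / (1 - p n)) / 2) - 1)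
      = (κseq n - 2 * c n) / (1 + c n) := fun n => by
    have := (hs n).ne'
    have : 1 + c n ≠ 0 := by linarith [hc n]
    rw [cosh_log_div_div_two (hp n).1 (hq n), hκdef n, add_sub_cancel]
    field_simp
    ring
  have hlim : Tendsto (fun n : ℕ => (n : ℝ) ^ 2 * (2 * (cosh (log (p n / (1 - p n)) / 2) - 1)))
      atTop (𝓝 (κ - 2 * ε)) := by
    have := (hκlim.sub (hclim.const_mul 2)).div
      (tendsto_const_nhds.add (tendsto_zero_of_tendsto_natCast_sq_mul hclim))
      (by norm_num : (1 : ℝ) + 0 ≠ 0)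
    rw [add_zero, div_one] at this
    exact this.congr fun n => by rw [Pi.div_apply, hcosh_log]; ring
  have hn : Tendsto (fun n : ℕ => (n : ℝ)) atTop atTop := tendsto_natCast_atTop_atTop
  have hA := tendsto_cosh_mul_of_tendsto_sq_mul_cosh_sub_one hn
    (hκlim.congr fun n => by rw [hcosh_r])
  have hB : Tendsto (fun n : ℕ => cosh ((n : ℝ) / 2 * log (p n / (1 - p n)))) atTop
      (𝓝 (cosh √(κ - 2 * ε))) :=
    (tendsto_cosh_mul_of_tendsto_sq_mul_cosh_sub_one hn hlim).congr fun n => by ring_nf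
  exact ((hA.sub hB).div hA (cosh_pos _).ne').rpow_const (Or.inr hα.le)

/-- Limit in Lemma 4.3: probability that no loop covers the whole circle. -/
theorem cover_prob_limit (κ ε α : ℝ) (hκ : 0 < κ) (hε0 : 0 ≤ ε)
    (hεκ : ε ≤ κ / 2) (hα : 0 < α) (p c κseq r : ℕ → ℝ)
    (hp : ∀ n, p n ∈ Set.Ioo (0 : ℝ) 1) (hc : ∀ n, 0 < c n)
    (hκdef : ∀ n, κseq n =
      (1 + c n - 2 * Real.sqrt (p n * (1 - p n))) / Real.sqrt (p n * (1 - p n)))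
    (hκlim : Tendsto (fun n : ℕ => (n : ℝ) ^ 2 * κseq n) atTop (nhds κ))
    (hclim : Tendsto (fun n : ℕ => (n : ℝ) ^ 2 * c n) atTop (nhds ε))
    (hr : ∀ n, r n = Real.log (1 + κseq n / 2 +
      Real.sqrt (κseq n + (κseq n) ^ 2 / 4))) :
    Tendsto (fun n : ℕ =>
        ((Real.cosh ((n : ℝ) * r n) -
            Real.cosh ((n : ℝ) / 2 * Real.log (p n / (1 - p n)))) /
          Real.cosh ((n : ℝ) * r n)) ^ α)
      atTop
      (nhds (((Real.cosh (Real.sqrt κ) - Real.cosh (Real.sqrt (κ - 2 * ε))) /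
        Real.cosh (Real.sqrt κ)) ^ α)) :=
  cover_prob_limit_general κ ε α hα p c κseq r hp hc hκdef hκlim hclim hr
end
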